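/- Let γ : ℝ → ℝ³ be three times differentiable with ‖γ(s)‖ = 1 and ‖γ'(s)‖ = 1 for all s, and define the dual curve γ*(s) = γ(s) × γ'(s). Then for every s: (i) ‖γ*'(s)‖² = (γ''(s) · (γ(s) × γ'(s)))², and (ii) |γ*''(s) · (γ*(s) × γ*'(s))| = (γ''(s) · (γ(s) × γ'(s)))². In particular, whenever γ''(s) · (γ(s) × γ'(s)) ≠ 0, one has |γ*''(s) · (γ*(s) × γ*'(s))| / ‖γ*'(s)‖² = 1. -/

import Mathlib

open Real
/-- The cross product on `EuclideanSpace ℝ (Fin 3)`. -/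
noncomputable def cross3 (a b : EuclideanSpace ℝ (Fin 3)) : EuclideanSpace ℝ (Fin 3) :=
  (WithLp.equiv 2 (Fin 3 → ℝ)).symm
    (crossProduct ((WithLp.equiv 2 (Fin 3 → ℝ)) a) ((WithLp.equiv 2 (Fin 3 → ℝ)) b))

/-!
Write `a = γ s`, `b = γ' s`, `c = γ'' s` and `[u, v, w] = u ⬝ (v × w)`. Then `γ*' = a × c` and
`γ*'' = a × γ''' + b × c`. The identity `(u × v) × (u × w) = [u, v, w] u` gives
`γ* × γ*' = [a, b, c] a`, hence `γ*'' ⬝ (γ* × γ*') = [a, b, c]²`.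
For the speed, apply Lagrange's identity to the same double cross product: differentiating
`‖γ‖ = ‖γ'‖ = 1` makes `a, b` orthonormal with `b ⊥ c`, so `‖a × b‖ = 1` and `a × b ⊥ a × c`,
whence `‖a × c‖ = |[a, b, c]|`.
-/

open WithLp Matrix
open scoped RealInnerProductSpace

section CrossProduct

variable (u v w x : EuclideanSpace ℝ (Fin 3))

theorem ofLp_cross3 : ofLp (cross3 u v) = ofLp u ⨯₃ ofLp v := rfl

theorem EuclideanSpace.real_inner_eq_dotProduct {ι : Type*} [Fintype ι]
    (x y : EuclideanSpace ℝ ι) : ⟪x, y⟫ = ofLp x ⬝ᵥ ofLp y :=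
  dotProduct_comm _ _

open EuclideanSpace

theorem cross3_self : cross3 u u = 0 :=
  ofLp_injective 2 <| cross_self (ofLp u)

theorem inner_self_cross3 : ⟪u, cross3 u v⟫ = 0 := by
  rw [real_inner_eq_dotProduct, ofLp_cross3, dot_self_cross]

theorem inner_cross3_perm : ⟪u, cross3 v w⟫ = ⟪v, cross3 w u⟫ := by
  rw [real_inner_eq_dotProduct, real_inner_eq_dotProduct, ofLp_cross3, ofLp_cross3,
    triple_product_permutation]

theorem inner_cross3_cross3 :
    ⟪cross3 u v, cross3 w x⟫ = ⟪u, w⟫ * ⟪v, x⟫ - ⟪u, x⟫ * ⟪v, w⟫ := by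
  simp only [real_inner_eq_dotProduct, ofLp_cross3, cross_dot_cross]

theorem cross3_cross3_cross3 : cross3 (cross3 u v) (cross3 u w) = ⟪u, cross3 v w⟫ • u := by
  refine ofLp_injective 2 ?_
  rw [ofLp_smul, ofLp_cross3, ofLp_cross3, ofLp_cross3, real_inner_eq_dotProduct, ofLp_cross3,
    cross_cross_eq_smul_sub_smul, dot_self_cross, zero_smul, zero_sub, ← neg_smul,
    triple_product_permutation (ofLp v), ← cross_anticomm, dotProduct_neg, neg_neg]

theorem norm_cross3_sq : ‖cross3 u v‖ ^ 2 = ‖u‖ ^ 2 * ‖v‖ ^ 2 - ⟪u, v⟫ ^ 2 := by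
  rw [← real_inner_self_eq_norm_sq, inner_cross3_cross3, real_inner_self_eq_norm_sq,
    real_inner_self_eq_norm_sq, real_inner_comm v u]
  ring

noncomputable def cross3L :
    EuclideanSpace ℝ (Fin 3) →L[ℝ] EuclideanSpace ℝ (Fin 3) →L[ℝ] EuclideanSpace ℝ (Fin 3) :=
  LinearMap.toContinuousBilinearMap
    ((crossProduct.compl₁₂ (WithLp.linearEquiv 2 ℝ (Fin 3 → ℝ)).toLinearMap
      (WithLp.linearEquiv 2 ℝ (Fin 3 → ℝ)).toLinearMap).compr₂
        (WithLp.linearEquiv 2 ℝ (Fin 3 → ℝ)).symm.toLinearMap)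

theorem HasDerivAt.cross3 {f g : ℝ → EuclideanSpace ℝ (Fin 3)} {f' g' : EuclideanSpace ℝ (Fin 3)}
    {s : ℝ} (hf : HasDerivAt f f' s) (hg : HasDerivAt g g' s) :
    HasDerivAt (fun t => cross3 (f t) (g t)) (cross3 (f s) g' + cross3 f' (g s)) s :=
  cross3L.hasDerivAt_of_bilinear (fun _ => hf) fun _ => hg

end CrossProduct

theorem inner_eq_zero_of_norm_eq_const {E : Type*} [NormedAddCommGroup E] [InnerProductSpace ℝ E]
    {f : ℝ → E} {f' : E} {s r : ℝ} (hf : HasDerivAt f f' s) (h : ∀ t, ‖f t‖ = r) :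
    ⟪f s, f'⟫ = 0 := by
  have hd := hf.inner ℝ hf
  simp only [real_inner_self_eq_norm_sq, h] at hd
  have h0 := hd.unique (hasDerivAt_const s _)
  linarith [real_inner_comm f' (f s)]

theorem norm_cross3_sq_eq_inner_cross3_sq {a b c : EuclideanSpace ℝ (Fin 3)} (ha : ‖a‖ = 1)
    (hb : ‖b‖ = 1) (hab : ⟪a, b⟫ = 0) (hbc : ⟪b, c⟫ = 0) :
    ‖cross3 a c‖ ^ 2 = ⟪c, cross3 a b⟫ ^ 2 :=
  calc ‖cross3 a c‖ ^ 2 = ‖cross3 (cross3 a b) (cross3 a c)‖ ^ 2 := by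
        rw [norm_cross3_sq (cross3 a b), norm_cross3_sq a b, inner_cross3_cross3,
          real_inner_self_eq_norm_sq, real_inner_comm a b, ha, hb, hab, hbc]
        ring
    _ = ⟪a, cross3 b c⟫ ^ 2 := by
        rw [cross3_cross3_cross3, norm_smul, ha, mul_one, Real.norm_eq_abs, sq_abs]
    _ = ⟪c, cross3 a b⟫ ^ 2 := by rw [inner_cross3_perm, inner_cross3_perm]

theorem inner_add_cross3_cross3_cross3 (a b c d : EuclideanSpace ℝ (Fin 3)) :
    ⟪cross3 a d + cross3 b c, cross3 (cross3 a b) (cross3 a c)⟫ = ⟪c, cross3 a b⟫ ^ 2 := by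
  rw [cross3_cross3_cross3, inner_smul_right, inner_add_left, real_inner_comm a, inner_self_cross3,
    real_inner_comm a, inner_cross3_perm a b c, inner_cross3_perm b c a]
  ring

/-- For a unit-speed curve `γ` on the unit sphere with dual curve `γ* = γ × γ'`:
(i) `‖γ*'‖² = (γ'' ⋅ (γ × γ'))²` and (ii) `|γ*'' ⋅ (γ* × γ*')| = (γ'' ⋅ (γ × γ'))²`;
in particular, when `γ'' ⋅ (γ × γ') ≠ 0`, the density
`|γ*'' ⋅ (γ* × γ*')| / ‖γ*'‖²` equals `1`. -/
theorem dual_curve_density_one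
    (γ γ' γ'' γ''' : ℝ → EuclideanSpace ℝ (Fin 3))
    (hd1 : ∀ s, HasDerivAt γ (γ' s) s) (hd2 : ∀ s, HasDerivAt γ' (γ'' s) s)
    (hd3 : ∀ s, HasDerivAt γ'' (γ''' s) s)
    (h1 : ∀ s, ‖γ s‖ = 1) (h2 : ∀ s, ‖γ' s‖ = 1)
    (γs : ℝ → EuclideanSpace ℝ (Fin 3))
    (hγs : ∀ s, γs s = cross3 (γ s) (γ' s)) :
    ∀ s : ℝ,
      ‖deriv γs s‖ ^ 2 = (inner ℝ (γ'' s) (cross3 (γ s) (γ' s)) : ℝ) ^ 2 ∧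
      |(inner ℝ (deriv (deriv γs) s) (cross3 (γs s) (deriv γs s)) : ℝ)|
        = (inner ℝ (γ'' s) (cross3 (γ s) (γ' s)) : ℝ) ^ 2 ∧
      ((inner ℝ (γ'' s) (cross3 (γ s) (γ' s)) : ℝ) ≠ 0 →
        |(inner ℝ (deriv (deriv γs) s) (cross3 (γs s) (deriv γs s)) : ℝ)| /
            ‖deriv γs s‖ ^ 2 = 1) := by
  intro s
  have hγs' : γs = fun t => cross3 (γ t) (γ' t) := funext hγs
  have hD : deriv γs = fun t => cross3 (γ t) (γ'' t) := funext fun t => by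
    rw [hγs', ((hd1 t).cross3 (hd2 t)).deriv, cross3_self, add_zero]
  have hDD : deriv (deriv γs) s = cross3 (γ s) (γ''' s) + cross3 (γ' s) (γ'' s) := by
    rw [hD]
    exact ((hd1 s).cross3 (hd3 s)).deriv
  have hspeed : ‖deriv γs s‖ ^ 2 = ⟪γ'' s, cross3 (γ s) (γ' s)⟫ ^ 2 := by
    rw [hD]
    exact norm_cross3_sq_eq_inner_cross3_sq (h1 s) (h2 s)
      (inner_eq_zero_of_norm_eq_const (hd1 s) h1) (inner_eq_zero_of_norm_eq_const (hd2 s) h2)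
  have htriple : ⟪deriv (deriv γs) s, cross3 (γs s) (deriv γs s)⟫ =
      ⟪γ'' s, cross3 (γ s) (γ' s)⟫ ^ 2 := by
    rw [hDD, hD, hγs]
    exact inner_add_cross3_cross3_cross3 _ _ _ _
  refine ⟨hspeed, by rw [htriple, abs_sq], fun hκ => ?_⟩
  rw [htriple, hspeed, abs_sq, div_self (pow_ne_zero 2 hκ)]
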